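/- arXiv:math/0612155 — 7 statements merged into one kernel-verified Lean document; each statement's English description precedes it below -/
import Mathlib

section
/- Let x, y ∈ ℝⁿ with y ≠ 0, and let z = x + iy. The (n−2)-sphere T(z) (center x, radius ‖y‖, in the hyperplane through x orthogonal to y) is contained in the open unit ball of ℝⁿ if and only if ‖z‖² + √(‖z‖⁴ − |Q(z)|²) < 1, where ‖z‖² = ‖x‖² + ‖y‖² and Q(z) = Σᵢ zᵢ². -/
open scoped RealInnerProductSpace

noncomputable section

def Q {n : ℕ} (z : EuclideanSpace ℂ (Fin n)) : ℂ := ∑ i, (z i) ^ 2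

def embed {n : ℕ} (x : EuclideanSpace ℝ (Fin n)) : EuclideanSpace ℂ (Fin n) :=
  WithLp.toLp 2 (fun i => (x i : ℂ))

lemma normsq_real' {n : ℕ} (x : EuclideanSpace ℝ (Fin n)) : ‖x‖^2 = ∑ i, x i ^ 2 := by
  rw [EuclideanSpace.norm_eq, Real.sq_sqrt (by positivity)]
  simp [sq_abs]

lemma real_inner_euclidean {n : ℕ} (x y : EuclideanSpace ℝ (Fin n)) :
    ⟪x, y⟫ = ∑ i, x i * y i := by
  simp [PiLp.inner_apply, RCLike.inner_apply]
  exact Finset.sum_congr rfl fun i _ => mul_comm _ _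

lemma normsq_c {n : ℕ} (x y : EuclideanSpace ℝ (Fin n)) :
    ‖embed x + Complex.I • embed y‖ ^ 2 = ‖x‖^2 + ‖y‖^2 := by
  rw [EuclideanSpace.norm_eq, Real.sq_sqrt (by positivity), normsq_real', normsq_real',
    ← Finset.sum_add_distrib]
  refine Finset.sum_congr rfl fun i _ => ?_
  simp [embed, Complex.sq_norm, Complex.normSq_apply]
  ring

lemma Q_eq {n : ℕ} (x y : EuclideanSpace ℝ (Fin n)) :
    Q (embed x + Complex.I • embed y)
      = ((‖x‖^2 - ‖y‖^2 : ℝ) : ℂ) + ((2 * ⟪x, y⟫ : ℝ) : ℂ) * Complex.I := by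
  rw [normsq_real', normsq_real', real_inner_euclidean]
  unfold Q
  have : ∀ i : Fin n, ((embed x + Complex.I • embed y) i)^2
      = (((x i)^2 - (y i)^2 : ℝ) : ℂ) + ((2 * (x i * y i) : ℝ) : ℂ) * Complex.I := by
    intro i
    have : (embed x + Complex.I • embed y) i = (x i : ℂ) + Complex.I * (y i : ℂ) := by simp [embed]
    rw [this]
    push_cast
    ring_nf
    rw [Complex.I_sq]
    ring
  rw [Finset.sum_congr rfl fun i _ => this i, Finset.sum_add_distrib, ← Finset.sum_mul]
  push_cast
  rw [Finset.sum_sub_distrib, ← Finset.mul_sum]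

lemma absQ_sq {n : ℕ} (x y : EuclideanSpace ℝ (Fin n)) :
    (‖Q (embed x + Complex.I • embed y)‖)^2
      = (‖x‖^2 - ‖y‖^2)^2 + 4 * ⟪x, y⟫^2 := by
  rw [Q_eq, Complex.sq_norm, Complex.normSq_add_mul_I]
  ring

lemma sq_lt_one_of_lt_one {a : ℝ} (h0 : 0 ≤ a) (h : a < 1) : a^2 < 1 := by nlinarith

lemma lt_one_of_sq_lt_one {a : ℝ} (h0 : 0 ≤ a) (h : a^2 < 1) : a < 1 := by nlinarith

theorem stmt1 (n : ℕ) (hn : 3 ≤ n) (x y : EuclideanSpace ℝ (Fin n)) (hy : y ≠ 0) :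
    ({a : EuclideanSpace ℝ (Fin n) | ⟪a - x, y⟫ = 0 ∧ ‖a - x‖ = ‖y‖} ⊆ Metric.ball 0 1) ↔
      ‖embed x + Complex.I • embed y‖ ^ 2 +
        Real.sqrt (‖embed x + Complex.I • embed y‖ ^ 4 -
          ‖Q (embed x + Complex.I • embed y)‖ ^ 2) < 1 := by
  have hY : 0 < ‖y‖ := norm_pos_iff.mpr hy
  have hY2 : 0 < ‖y‖^2 := by positivity
  obtain ⟨S, hS⟩ : ∃ S : ℝ, S = ⟪x, y⟫ := ⟨_, rfl⟩
  -- rewrite RHS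
  have h4 : ‖embed x + Complex.I • embed y‖ ^ 4 = (‖x‖^2 + ‖y‖^2)^2 := by
    rw [show ‖embed x + Complex.I • embed y‖ ^ 4
      = (‖embed x + Complex.I • embed y‖ ^ 2)^2 by ring, normsq_c]
  have hsqrt : Real.sqrt (‖embed x + Complex.I • embed y‖ ^ 4 -
      ‖Q (embed x + Complex.I • embed y)‖ ^ 2)
      = 2 * Real.sqrt (‖x‖^2 * ‖y‖^2 - S^2) := by
    rw [h4, absQ_sq, ← hS]
    have he : (‖x‖^2 + ‖y‖^2)^2 - ((‖x‖^2 - ‖y‖^2)^2 + 4 * S^2)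
        = 4 * (‖x‖^2 * ‖y‖^2 - S^2) := by ring
    rw [he, show (4:ℝ) = 2^2 by norm_num, Real.sqrt_mul (by positivity),
      Real.sqrt_sq (by norm_num)]
  rw [normsq_c, hsqrt]
  -- projection p of x onto the hyperplane orthogonal to y
  obtain ⟨p, hpdef⟩ : ∃ p : EuclideanSpace ℝ (Fin n),
      p = x - (S / ‖y‖^2) • y := ⟨_, rfl⟩
  have hpy : ⟪p, y⟫ = 0 := by
    rw [hpdef, inner_sub_left, real_inner_smul_left, real_inner_self_eq_norm_sq, ← hS]
    field_simp
    ring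
  have hxp : x = p + (S / ‖y‖^2) • y := by rw [hpdef]; abel
  have hpx : ⟪p, x⟫ = ‖p‖^2 := by
    have e : ⟪p, p + (S / ‖y‖^2) • y⟫ = ⟪p, p⟫ + (S / ‖y‖^2) * ⟪p, y⟫ := by
      rw [inner_add_right, real_inner_smul_right]
    rw [← hxp] at e
    rw [e, hpy, real_inner_self_eq_norm_sq]
    ring
  have hX : ‖x‖^2 = ‖p‖^2 + S^2 / ‖y‖^2 := by
    conv_lhs => rw [hxp]
    rw [norm_add_sq_real, real_inner_smul_right, hpy, norm_smul, Real.norm_eq_abs,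
      mul_pow, sq_abs]
    rw [div_pow]
    field_simp
    ring
  have hp2 : ‖p‖^2 * ‖y‖^2 = ‖x‖^2 * ‖y‖^2 - S^2 := by
    rw [hX]; field_simp; ring
  have hkey : ‖p‖ * ‖y‖ = Real.sqrt (‖x‖^2 * ‖y‖^2 - S^2) := by
    rw [← hp2, show ‖p‖^2 * ‖y‖^2 = (‖p‖*‖y‖)^2 by ring, Real.sqrt_sq (by positivity)]
  constructor
  · -- forward direction
    intro h
    by_cases hp : p = 0
    · -- degenerate case: x is parallel to y
      have hz : ‖x‖^2 * ‖y‖^2 - S^2 = 0 := by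
        rw [← hp2, hp]; simp
      rw [hz, Real.sqrt_zero, mul_zero, add_zero]
      obtain ⟨v, hv_mem, hv0⟩ : ∃ v ∈ (ℝ ∙ y)ᗮ, v ≠ 0 := by
        have h1 : Module.finrank ℝ (ℝ ∙ y) = 1 := finrank_span_singleton hy
        have h2 := Submodule.finrank_add_finrank_orthogonal (𝕜 := ℝ) (ℝ ∙ y)
        rw [h1, finrank_euclideanSpace_fin] at h2
        have hrank : 0 < Module.finrank ℝ (ℝ ∙ y)ᗮ := by omega
        have : Nontrivial ((ℝ ∙ y)ᗮ : Submodule ℝ (EuclideanSpace ℝ (Fin n))) :=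
          Module.finrank_pos_iff.mp hrank
        obtain ⟨⟨v, hv⟩, hne⟩ := exists_ne (0 : ((ℝ ∙ y)ᗮ : Submodule ℝ (EuclideanSpace ℝ (Fin n))))
        exact ⟨v, hv, fun h0 => hne (Subtype.ext h0)⟩
      have hvy : ⟪v, y⟫ = 0 := by
        have := hv_mem y (Submodule.mem_span_singleton_self y)
        rwa [real_inner_comm] at this
      have hv : 0 < ‖v‖ := norm_pos_iff.mpr hv0
      obtain ⟨w, hwdef⟩ : ∃ w : EuclideanSpace ℝ (Fin n), w = (‖y‖ / ‖v‖) • v := ⟨_, rfl⟩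
      have hwy : ⟪w, y⟫ = 0 := by rw [hwdef, real_inner_smul_left, hvy, mul_zero]
      have hwn : ‖w‖ = ‖y‖ := by
        rw [hwdef, norm_smul, Real.norm_eq_abs, abs_of_pos (div_pos hY hv)]
        field_simp
      have hmem : x + w ∈ {a : EuclideanSpace ℝ (Fin n) | ⟪a - x, y⟫ = 0 ∧ ‖a - x‖ = ‖y‖} :=
        ⟨by rw [add_sub_cancel_left]; exact hwy, by rw [add_sub_cancel_left]; exact hwn⟩
      have hlt : ‖x + w‖ < 1 := by
        have := h hmem
        rwa [Metric.mem_ball, dist_zero_right] at this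
      have hyw : ⟪y, w⟫ = 0 := by rw [real_inner_comm]; exact hwy
      have hxw : ⟪x, w⟫ = 0 := by
        rw [hxp, hp, zero_add, real_inner_smul_left, hyw, mul_zero]
      have hsq : ‖x + w‖^2 = ‖x‖^2 + ‖y‖^2 := by
        rw [norm_add_sq_real, hxw, hwn]; ring
      have := sq_lt_one_of_lt_one (norm_nonneg (x + w)) hlt
      linarith [hsq ▸ this]
    · -- nondegenerate case
      have hpn : 0 < ‖p‖ := norm_pos_iff.mpr hp
      obtain ⟨w, hwdef⟩ : ∃ w : EuclideanSpace ℝ (Fin n), w = (‖y‖ / ‖p‖) • p := ⟨_, rfl⟩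
      have hwy : ⟪w, y⟫ = 0 := by rw [hwdef, real_inner_smul_left, hpy, mul_zero]
      have hwn : ‖w‖ = ‖y‖ := by
        rw [hwdef, norm_smul, Real.norm_eq_abs, abs_of_pos (div_pos hY hpn)]
        field_simp
      have hmem : x + w ∈ {a : EuclideanSpace ℝ (Fin n) | ⟪a - x, y⟫ = 0 ∧ ‖a - x‖ = ‖y‖} :=
        ⟨by rw [add_sub_cancel_left]; exact hwy, by rw [add_sub_cancel_left]; exact hwn⟩
      have hlt : ‖x + w‖ < 1 := by
        have := h hmem
        rwa [Metric.mem_ball, dist_zero_right] at this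
      have hxw : ⟪x, w⟫ = ‖p‖ * ‖y‖ := by
        rw [hwdef, real_inner_smul_right, real_inner_comm, hpx]
        field_simp
      have hsq : ‖x + w‖^2 = ‖x‖^2 + ‖y‖^2 + 2 * Real.sqrt (‖x‖^2 * ‖y‖^2 - S^2) := by
        rw [norm_add_sq_real, hxw, hwn, hkey]; ring
      have := sq_lt_one_of_lt_one (norm_nonneg (x + w)) hlt
      linarith [hsq ▸ this]
  · -- backward direction
    intro hlt a ha
    obtain ⟨ha1, ha2⟩ := ha
    obtain ⟨w, hwdef⟩ : ∃ w : EuclideanSpace ℝ (Fin n), w = a - x := ⟨_, rfl⟩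
    have haw : a = x + w := by rw [hwdef]; abel
    have hwy : ⟪w, y⟫ = 0 := by rw [hwdef]; exact ha1
    have hwn : ‖w‖ = ‖y‖ := by rw [hwdef]; exact ha2
    have hyw : ⟪y, w⟫ = 0 := by rw [real_inner_comm]; exact hwy
    have hxw : ⟪x, w⟫ ≤ Real.sqrt (‖x‖^2 * ‖y‖^2 - S^2) := by
      have e1 : ⟪p + (S / ‖y‖^2) • y, w⟫ = ⟪p, w⟫ + (S / ‖y‖^2) * ⟪y, w⟫ := by
        rw [inner_add_left, real_inner_smul_left]
      rw [← hxp] at e1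
      rw [e1, hyw, mul_zero, add_zero, ← hkey]
      calc ⟪p, w⟫ ≤ ‖p‖ * ‖w‖ := real_inner_le_norm p w
        _ = ‖p‖ * ‖y‖ := by rw [hwn]
    have hsq : ‖a‖^2 ≤ ‖x‖^2 + ‖y‖^2 + 2 * Real.sqrt (‖x‖^2 * ‖y‖^2 - S^2) := by
      rw [haw, norm_add_sq_real, hwn]
      linarith
    rw [Metric.mem_ball, dist_zero_right]
    exact lt_one_of_sq_lt_one (norm_nonneg a) (by linarith)

end
end

section
/- For x, y ∈ ℝⁿ, the maximum euclidean norm of a point on the sphere {a : ⟨a−x, y⟩ = 0, ‖a−x‖ = ‖y‖} (with y ≠ 0) equals √(‖x‖² + ‖y‖² + 2√(‖x‖²‖y‖² − ⟨x,y⟩²)). -/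
/-!
Write a point of the sphere as `a = x + v` with `v ∈ K := yᗮ` and `‖v‖ = ‖y‖`. Then
`‖a‖² = ‖x‖² + ‖y‖² + 2⟪P x, v⟫`, where `P` is the orthogonal projection onto `K`, so by
Cauchy–Schwarz `‖a‖² ≤ ‖x‖² + ‖y‖² + 2‖y‖‖P x‖`, with equality when `v` is a nonnegative multiple
of `P x` (any `v` if `P x = 0`; one exists because `dim K = n - 1 ≥ 1`). Pythagoras gives
`‖y‖² ‖P x‖² = ‖x‖²‖y‖² - ⟪x, y⟫²`.
-/

open scoped RealInnerProductSpace

variable {E : Type*} [NormedAddCommGroup E] [InnerProductSpace ℝ E]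

theorem exists_norm_eq_and_inner_eq_mul_norm [Nontrivial E] (u : E) {r : ℝ} (hr : 0 ≤ r) :
    ∃ v : E, ‖v‖ = r ∧ ⟪u, v⟫ = r * ‖u‖ := by
  rcases eq_or_ne u 0 with rfl | hu
  · obtain ⟨v, hv⟩ := exists_norm_eq E hr
    exact ⟨v, hv, by simp⟩
  · have hu' : ‖u‖ ≠ 0 := norm_ne_zero_iff.mpr hu
    refine ⟨(r / ‖u‖) • u, ?_, ?_⟩
    · rw [norm_smul, Real.norm_of_nonneg (by positivity), div_mul_cancel₀ _ hu']
    · rw [real_inner_smul_right, real_inner_self_eq_norm_sq]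
      field_simp

theorem nontrivial_orthogonal_span_singleton [FiniteDimensional ℝ E]
    (hE : 2 ≤ Module.finrank ℝ E) {y : E} (hy : y ≠ 0) : Nontrivial (ℝ ∙ y)ᗮ := by
  apply (Module.finrank_pos_iff (R := ℝ)).mp
  have hsum := (ℝ ∙ y).finrank_add_finrank_orthogonal
  rw [finrank_span_singleton hy] at hsum
  omega

namespace Submodule

variable (K : Submodule ℝ E) [K.HasOrthogonalProjection]

theorem real_inner_le_norm_orthogonalProjectionOnto_mul_norm (x : E) {v : E} (hv : v ∈ K) :
    ⟪x, v⟫ ≤ ‖K.orthogonalProjectionOnto x‖ * ‖v‖ :=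
  calc ⟪x, v⟫ = ⟪K.orthogonalProjectionOnto x, (⟨v, hv⟩ : K)⟫ :=
        (K.inner_orthogonalProjectionOnto_eq_of_mem_right ⟨v, hv⟩ x).symm
    _ ≤ ‖K.orthogonalProjectionOnto x‖ * ‖v‖ := real_inner_le_norm _ _

theorem isGreatest_norm_image_affine_sphere [Nontrivial K] (x : E) {r : ℝ} (hr : 0 ≤ r) :
    IsGreatest ((fun a => ‖a‖) '' {a | a - x ∈ K ∧ ‖a - x‖ = r})
      √(‖x‖ ^ 2 + r ^ 2 + 2 * r * ‖K.orthogonalProjectionOnto x‖) := by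
  constructor
  · obtain ⟨v, hv_norm, hv_inner⟩ :=
      exists_norm_eq_and_inner_eq_mul_norm (K.orthogonalProjectionOnto x) hr
    rw [inner_orthogonalProjectionOnto_eq_of_mem_right] at hv_inner
    rw [coe_norm] at hv_norm
    refine ⟨x + v, by simpa using hv_norm, ?_⟩
    dsimp only
    rw [← Real.sqrt_sq (norm_nonneg (x + v)), norm_add_sq_real, hv_inner, hv_norm]
    ring_nf
  · rintro _ ⟨a, ⟨haK, rfl⟩, rfl⟩
    dsimp only
    apply Real.le_sqrt_of_sq_le
    have hcs := K.real_inner_le_norm_orthogonalProjectionOnto_mul_norm x haK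
    calc ‖a‖ ^ 2 = ‖x + (a - x)‖ ^ 2 := by rw [add_sub_cancel]
      _ = ‖x‖ ^ 2 + 2 * ⟪x, a - x⟫ + ‖a - x‖ ^ 2 := norm_add_sq_real _ _
      _ ≤ _ := by linarith

end Submodule

theorem norm_mul_norm_orthogonalProjectionOnto_orthogonal_span_singleton (x y : E) :
    ‖y‖ * ‖(ℝ ∙ y)ᗮ.orthogonalProjectionOnto x‖ = √(‖x‖ ^ 2 * ‖y‖ ^ 2 - ⟪x, y⟫ ^ 2) := by
  have hpyth := (ℝ ∙ y).norm_sq_eq_add_norm_sq_projection x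
  have hproj : ‖(ℝ ∙ y).orthogonalProjectionOnto x‖ * ‖y‖ = |⟪x, y⟫| := by
    rcases eq_or_ne y 0 with rfl | hy
    · simp
    rw [← Submodule.norm_coe, ← Submodule.starProjection_apply, Submodule.starProjection_singleton]
    simp only [real_inner_comm, Real.ringHom_apply, norm_smul, norm_div, Real.norm_eq_abs, norm_pow,
      abs_norm]
    field_simp [norm_ne_zero_iff.mpr hy]
  rw [← Real.sqrt_sq (by positivity : 0 ≤ ‖y‖ * ‖(ℝ ∙ y)ᗮ.orthogonalProjectionOnto x‖),
    ← sq_abs ⟪x, y⟫, ← hproj]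
  congr 1
  linear_combination (-‖y‖ ^ 2) * hpyth

theorem stmt2 (n : ℕ) (hn : 2 ≤ n) (x y : EuclideanSpace ℝ (Fin n)) (hy : y ≠ 0) :
    IsGreatest ((fun a => ‖a‖) ''
        {a : EuclideanSpace ℝ (Fin n) | ⟪a - x, y⟫ = 0 ∧ ‖a - x‖ = ‖y‖})
      (Real.sqrt (‖x‖ ^ 2 + ‖y‖ ^ 2 +
        2 * Real.sqrt (‖x‖ ^ 2 * ‖y‖ ^ 2 - ⟪x, y⟫ ^ 2))) := by
  have : Nontrivial (ℝ ∙ y)ᗮ :=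
    nontrivial_orthogonal_span_singleton (by rwa [finrank_euclideanSpace_fin]) hy
  have hset : {a | ⟪a - x, y⟫ = 0 ∧ ‖a - x‖ = ‖y‖} = {a | a - x ∈ (ℝ ∙ y)ᗮ ∧ ‖a - x‖ = ‖y‖} := by
    simp_rw [Submodule.mem_orthogonal_singleton_iff_inner_left]
  rw [hset, ← norm_mul_norm_orthogonalProjectionOnto_orthogonal_span_singleton, ← mul_assoc]
  exact (ℝ ∙ y)ᗮ.isGreatest_norm_image_affine_sphere x (norm_nonneg y)
end

section
/- The Lie ball ℬⁿ = {z ∈ ℂⁿ : ‖z‖² + √(‖z‖⁴ − |Q(z)|²) < 1} is a convex subset of ℂⁿ. -/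
open scoped RealInnerProductSpace

noncomputable section

def LieBall (n : ℕ) : Set (EuclideanSpace ℂ (Fin n)) :=
  {z | ‖z‖ ^ 2 + Real.sqrt (‖z‖ ^ 4 - ‖Q z‖ ^ 2) < 1}

/-! ### Auxiliary material for the convexity of the Lie ball.

Write `z = x + i y` with real vectors `x, y`.  The quantity
`‖z‖² + √(‖z‖⁴ - |Q z|²)` equals `A + B + 2√(AB - C²)` where
`A = ⟨x,x⟩, B = ⟨y,y⟩, C = ⟨x,y⟩`; its square root is the nuclear norm of the
matrix with columns `x, y`, which we characterize as a supremum of linear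
functionals over pairs `(u,v)` spanning an "operator-norm ≤ 1" map, giving
subadditivity and hence convexity. -/

def Dsum {n : ℕ} (f g : Fin n → ℝ) : ℝ := ∑ i, f i * g i

namespace Dsum
variable {n : ℕ}

lemma comm (f g : Fin n → ℝ) : Dsum f g = Dsum g f := by
  unfold Dsum; exact Finset.sum_congr rfl fun i _ => mul_comm _ _

lemma self_nonneg (f : Fin n → ℝ) : 0 ≤ Dsum f f :=
  Finset.sum_nonneg fun i _ => mul_self_nonneg _

lemma expand (a b a' b' : ℝ) (f g h k : Fin n → ℝ) :
    Dsum (fun i => a * f i + b * g i) (fun i => a' * h i + b' * k i)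
      = a * a' * Dsum f h + a * b' * Dsum f k + b * a' * Dsum g h + b * b' * Dsum g k := by
  unfold Dsum
  simp only [Finset.mul_sum, ← Finset.sum_add_distrib]
  exact Finset.sum_congr rfl fun i _ => by ring

lemma add_left (a b : ℝ) (f g h : Fin n → ℝ) :
    Dsum (fun i => a * f i + b * g i) h = a * Dsum f h + b * Dsum g h := by
  unfold Dsum
  simp only [Finset.mul_sum, ← Finset.sum_add_distrib]
  exact Finset.sum_congr rfl fun i _ => by ring

lemma smul_right (b : ℝ) (f g : Fin n → ℝ) :
    Dsum f (fun i => b * g i) = b * Dsum f g := by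
  unfold Dsum
  rw [Finset.mul_sum]
  exact Finset.sum_congr rfl fun i _ => by ring

lemma smul_smul (a b : ℝ) (f g : Fin n → ℝ) :
    Dsum (fun i => a * f i) (fun i => b * g i) = a * b * Dsum f g := by
  unfold Dsum
  rw [Finset.mul_sum]
  exact Finset.sum_congr rfl fun i _ => by ring

lemma cauchy (f g : Fin n → ℝ) : Dsum f g * Dsum f g ≤ Dsum f f * Dsum g g := by
  have := Finset.sum_mul_sq_le_sq_mul_sq Finset.univ f g
  unfold Dsum
  calc (∑ i, f i * g i) * (∑ i, f i * g i) = (∑ i, f i * g i) ^ 2 := by ring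
    _ ≤ (∑ i, f i ^ 2) * (∑ i, g i ^ 2) := this
    _ = (∑ i, f i * f i) * (∑ i, g i * g i) := by
        congr 1 <;> exact Finset.sum_congr rfl fun i _ => by ring

end Dsum

/-- There is a rotation making the cross term vanish. -/
lemma exists_rot {n : ℕ} (X Y : Fin n → ℝ) :
    ∃ c s : ℝ, c * c + s * s = 1 ∧
      Dsum (fun i => c * X i + (-s) * Y i) (fun i => s * X i + c * Y i) = 0 := by
  set A := Dsum X X
  set B := Dsum Y Y
  set C := Dsum X Y
  set g : ℝ → ℝ := fun θ =>
    Real.cos θ * Real.sin θ * (A - B) + (Real.cos θ * Real.cos θ - Real.sin θ * Real.sin θ) * C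
    with hg
  have hcont : ContinuousOn g (Set.Icc 0 (Real.pi / 2)) := by
    apply Continuous.continuousOn
    fun_prop
  have hg0 : g 0 = C := by simp [hg]
  have hgpi : g (Real.pi / 2) = -C := by simp [hg]
  have : ∃ θ ∈ Set.Icc 0 (Real.pi / 2), g θ = 0 := by
    have hle : (0:ℝ) ≤ Real.pi / 2 := by positivity
    rcases le_total C 0 with hC | hC
    · have := intermediate_value_Icc hle hcont
      have h0 : (0:ℝ) ∈ Set.Icc (g 0) (g (Real.pi / 2)) := by
        rw [hg0, hgpi]; constructor <;> linarith
      obtain ⟨θ, hθ, hθ0⟩ := this h0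
      exact ⟨θ, hθ, hθ0⟩
    · have := intermediate_value_Icc' hle hcont
      have h0 : (0:ℝ) ∈ Set.Icc (g (Real.pi / 2)) (g 0) := by
        rw [hg0, hgpi]; constructor <;> linarith
      obtain ⟨θ, hθ, hθ0⟩ := this h0
      exact ⟨θ, hθ, hθ0⟩
  obtain ⟨θ, _, hθ0⟩ := this
  refine ⟨Real.cos θ, Real.sin θ, ?_, ?_⟩
  · have := Real.sin_sq_add_cos_sq θ
    nlinarith [this]
  · rw [Dsum.expand]
    rw [Dsum.comm Y X]
    rw [hg] at hθ0
    simp only at hθ0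
    linear_combination hθ0

/-- Square-root combination lemma. -/
lemma sqrt_comb {A B C A' B' : ℝ} (hA' : 0 ≤ A') (hB' : 0 ≤ B')
    (hsum : A' + B' = A + B) (hdet : A' * B' = A * B - C * C) :
    Real.sqrt A' + Real.sqrt B'
      = Real.sqrt (A + B + 2 * Real.sqrt (A * B - C * C)) := by
  have h1 : A + B + 2 * Real.sqrt (A * B - C * C)
      = (Real.sqrt A' + Real.sqrt B') ^ 2 := by
    rw [← hdet, ← hsum, Real.sqrt_mul hA']
    have e1 : Real.sqrt A' ^ 2 = A' := Real.sq_sqrt hA'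
    have e2 : Real.sqrt B' ^ 2 = B' := Real.sq_sqrt hB'
    nlinarith [e1, e2]
  rw [h1, Real.sqrt_sq (by positivity)]

/-- Cauchy–Schwarz corollary. -/
lemma cs_le_sqrt {n : ℕ} (f g : Fin n → ℝ) (hg : Dsum g g ≤ 1) :
    Dsum f g ≤ Real.sqrt (Dsum f f) := by
  rcases le_or_gt (Dsum f g) 0 with h | h
  · exact h.trans (Real.sqrt_nonneg _)
  · have h1 : Dsum f g * Dsum f g ≤ Dsum f f := by
      have := Dsum.cauchy f g
      nlinarith [Dsum.self_nonneg f]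
    nlinarith [Real.sq_sqrt (Dsum.self_nonneg f), Real.sqrt_nonneg (Dsum f f)]

/-- Pairs `(u, v)` spanning a contraction. -/
def LieConstraint {n : ℕ} (u v : Fin n → ℝ) : Prop :=
  ∀ s t : ℝ, Dsum (fun i => s * u i + t * v i) (fun i => s * u i + t * v i) ≤ s * s + t * t

lemma upper_aux {n : ℕ} (X Y u v : Fin n → ℝ) (hP : LieConstraint u v) :
    Dsum X u + Dsum Y v
      ≤ Real.sqrt (Dsum X X + Dsum Y Y
          + 2 * Real.sqrt (Dsum X X * Dsum Y Y - Dsum X Y * Dsum X Y)) := by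
  obtain ⟨c, s, hcs, hrot⟩ := exists_rot X Y
  set X' : Fin n → ℝ := fun i => c * X i + (-s) * Y i with hX'
  set Y' : Fin n → ℝ := fun i => s * X i + c * Y i with hY'
  set u' : Fin n → ℝ := fun i => c * u i + (-s) * v i with hu'
  set v' : Fin n → ℝ := fun i => s * u i + c * v i with hv'
  have eA : Dsum X' X' = c * c * Dsum X X - 2 * (c * s) * Dsum X Y + s * s * Dsum Y Y := by
    rw [hX', Dsum.expand, Dsum.comm Y X]; ring
  have eB : Dsum Y' Y' = s * s * Dsum X X + 2 * (c * s) * Dsum X Y + c * c * Dsum Y Y := by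
    rw [hY', Dsum.expand, Dsum.comm Y X]; ring
  have eC : Dsum X' Y' = c * s * (Dsum X X - Dsum Y Y) + (c * c - s * s) * Dsum X Y := by
    rw [hX', hY', Dsum.expand, Dsum.comm Y X]; ring
  have hsum : Dsum X' X' + Dsum Y' Y' = Dsum X X + Dsum Y Y := by
    rw [eA, eB]; linear_combination (Dsum X X + Dsum Y Y) * hcs
  have hdet : Dsum X' X' * Dsum Y' Y' = Dsum X X * Dsum Y Y - Dsum X Y * Dsum X Y := by
    have key : Dsum X' X' * Dsum Y' Y'
        = (Dsum X X * Dsum Y Y - Dsum X Y * Dsum X Y) * ((c * c + s * s) * (c * c + s * s))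
          + Dsum X' Y' * Dsum X' Y' := by
      rw [eA, eB, eC]; ring
    rw [key, hcs, hrot]; ring
  have hpair : Dsum X u + Dsum Y v = Dsum X' u' + Dsum Y' v' := by
    rw [hX', hu', Dsum.expand, hY', hv', Dsum.expand]
    linear_combination (Dsum X u + Dsum Y v) * hcs.symm
  have hu'1 : Dsum u' u' ≤ 1 := by
    have := hP c (-s)
    rw [hu'] ; convert this using 2 ; nlinarith [hcs]
  have hv'1 : Dsum v' v' ≤ 1 := by
    have := hP s c
    rw [hv'] ; exact this.trans (by nlinarith [hcs])
  have h1 : Dsum X' u' ≤ Real.sqrt (Dsum X' X') := cs_le_sqrt _ _ hu'1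
  have h2 : Dsum Y' v' ≤ Real.sqrt (Dsum Y' Y') := cs_le_sqrt _ _ hv'1
  have hfin := sqrt_comb (Dsum.self_nonneg X') (Dsum.self_nonneg Y') hsum hdet
  rw [hpair, ← hfin]
  linarith

lemma attain_aux {n : ℕ} (X Y : Fin n → ℝ) :
    ∃ u v : Fin n → ℝ, LieConstraint u v ∧
      Real.sqrt (Dsum X X + Dsum Y Y
          + 2 * Real.sqrt (Dsum X X * Dsum Y Y - Dsum X Y * Dsum X Y))
        ≤ Dsum X u + Dsum Y v := by
  obtain ⟨c, s, hcs, hrot⟩ := exists_rot X Y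
  set X' : Fin n → ℝ := fun i => c * X i + (-s) * Y i with hX'
  set Y' : Fin n → ℝ := fun i => s * X i + c * Y i with hY'
  set A' := Dsum X' X' with hA'
  set B' := Dsum Y' Y' with hB'
  have hA'0 : 0 ≤ A' := Dsum.self_nonneg X'
  have hB'0 : 0 ≤ B' := Dsum.self_nonneg Y'
  have eA : Dsum X' X' = c * c * Dsum X X - 2 * (c * s) * Dsum X Y + s * s * Dsum Y Y := by
    rw [hX', Dsum.expand, Dsum.comm Y X]; ring
  have eB : Dsum Y' Y' = s * s * Dsum X X + 2 * (c * s) * Dsum X Y + c * c * Dsum Y Y := by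
    rw [hY', Dsum.expand, Dsum.comm Y X]; ring
  have eC : Dsum X' Y' = c * s * (Dsum X X - Dsum Y Y) + (c * c - s * s) * Dsum X Y := by
    rw [hX', hY', Dsum.expand, Dsum.comm Y X]; ring
  have hsum : A' + B' = Dsum X X + Dsum Y Y := by
    rw [hA', hB', eA, eB]; linear_combination (Dsum X X + Dsum Y Y) * hcs
  have hdet : A' * B' = Dsum X X * Dsum Y Y - Dsum X Y * Dsum X Y := by
    have key : Dsum X' X' * Dsum Y' Y'
        = (Dsum X X * Dsum Y Y - Dsum X Y * Dsum X Y) * ((c * c + s * s) * (c * c + s * s))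
          + Dsum X' Y' * Dsum X' Y' := by
      rw [eA, eB, eC]; ring
    rw [hA', hB', key, hcs, hrot]; ring
  set ru : ℝ := if A' = 0 then 0 else (Real.sqrt A')⁻¹ with hru
  set rv : ℝ := if B' = 0 then 0 else (Real.sqrt B')⁻¹ with hrv
  set u' : Fin n → ℝ := fun i => ru * X' i with hu'
  set v' : Fin n → ℝ := fun i => rv * Y' i with hv'
  have hu'u' : Dsum u' u' ≤ 1 := by
    rw [hu', Dsum.smul_smul]
    rcases eq_or_ne A' 0 with h | h
    · simp [hru, h]
    · rw [hru, if_neg h]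
      have hm : Real.sqrt A' * Real.sqrt A' = A' := Real.mul_self_sqrt hA'0
      rw [← hA', ← mul_inv, hm, inv_mul_cancel₀ h]
  have hv'v' : Dsum v' v' ≤ 1 := by
    rw [hv', Dsum.smul_smul]
    rcases eq_or_ne B' 0 with h | h
    · simp [hrv, h]
    · rw [hrv, if_neg h]
      have hm : Real.sqrt B' * Real.sqrt B' = B' := Real.mul_self_sqrt hB'0
      rw [← hB', ← mul_inv, hm, inv_mul_cancel₀ h]
  have hu'v' : Dsum u' v' = 0 := by
    rw [hu', hv', Dsum.smul_smul, hrot, mul_zero]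
  set u : Fin n → ℝ := fun i => c * u' i + s * v' i with hu
  set v : Fin n → ℝ := fun i => (-s) * u' i + c * v' i with hv
  refine ⟨u, v, ?_, ?_⟩
  · intro s0 t0
    have hrw : (fun i => s0 * u i + t0 * v i)
        = fun i => (s0 * c + t0 * (-s)) * u' i + (s0 * s + t0 * c) * v' i := by
      funext i; rw [hu, hv]; ring
    have hv'u' : Dsum v' u' = 0 := by rw [Dsum.comm]; exact hu'v'
    rw [hrw, Dsum.expand, hu'v', hv'u']
    have hst : (s0 * c + t0 * (-s)) * (s0 * c + t0 * (-s))
        + (s0 * s + t0 * c) * (s0 * s + t0 * c) = s0 * s0 + t0 * t0 := by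
      linear_combination (s0 * s0 + t0 * t0) * hcs
    nlinarith [hu'u', hv'v', hst, mul_self_nonneg (s0 * c + t0 * (-s)),
      mul_self_nonneg (s0 * s + t0 * c)]
  · have hUeq : (fun i => c * u i + (-s) * v i) = u' := by
      funext i; rw [hu, hv]; simp only []
      linear_combination (u' i) * hcs
    have hVeq : (fun i => s * u i + c * v i) = v' := by
      funext i; rw [hu, hv]; simp only []
      linear_combination (v' i) * hcs
    have hpair : Dsum X u + Dsum Y v = Dsum X' u' + Dsum Y' v' := by
      rw [hX', ← hUeq, Dsum.expand, hY', ← hVeq, Dsum.expand]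
      linear_combination (Dsum X u + Dsum Y v) * hcs.symm
    have hXu : Dsum X' u' = Real.sqrt A' := by
      rw [hu', Dsum.smul_right, ← hA']
      rcases eq_or_ne A' 0 with h | h
      · rw [hru, if_pos h, h, Real.sqrt_zero, zero_mul]
      · rw [hru, if_neg h]
        rw [inv_mul_eq_div, Real.div_sqrt]
    have hYv : Dsum Y' v' = Real.sqrt B' := by
      rw [hv', Dsum.smul_right, ← hB']
      rcases eq_or_ne B' 0 with h | h
      · rw [hrv, if_pos h, h, Real.sqrt_zero, zero_mul]
      · rw [hrv, if_neg h]
        rw [inv_mul_eq_div, Real.div_sqrt]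
    rw [hpair, hXu, hYv, ← sqrt_comb hA'0 hB'0 hsum hdet]

def Xp {n : ℕ} (z : EuclideanSpace ℂ (Fin n)) : Fin n → ℝ := fun i => (z i).re
def Yp {n : ℕ} (z : EuclideanSpace ℂ (Fin n)) : Fin n → ℝ := fun i => (z i).im

lemma norm_sq_eq {n : ℕ} (z : EuclideanSpace ℂ (Fin n)) :
    ‖z‖ ^ 2 = Dsum (Xp z) (Xp z) + Dsum (Yp z) (Yp z) := by
  have h : ‖z‖ = Real.sqrt (∑ i, ‖z i‖ ^ 2) := EuclideanSpace.norm_eq z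
  rw [h, Real.sq_sqrt (Finset.sum_nonneg fun i _ => sq_nonneg _)]
  unfold Dsum Xp Yp
  rw [← Finset.sum_add_distrib]
  refine Finset.sum_congr rfl fun i _ => ?_
  rw [Complex.sq_norm, Complex.normSq_apply]

lemma Q_re {n : ℕ} (z : EuclideanSpace ℂ (Fin n)) :
    (Q z).re = Dsum (Xp z) (Xp z) - Dsum (Yp z) (Yp z) := by
  unfold Q Dsum Xp Yp
  rw [Complex.re_sum, ← Finset.sum_sub_distrib]
  refine Finset.sum_congr rfl fun i _ => ?_
  rw [sq, Complex.mul_re]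

lemma Q_im {n : ℕ} (z : EuclideanSpace ℂ (Fin n)) :
    (Q z).im = 2 * Dsum (Xp z) (Yp z) := by
  unfold Q Dsum Xp Yp
  rw [Complex.im_sum, Finset.mul_sum]
  refine Finset.sum_congr rfl fun i _ => ?_
  rw [sq, Complex.mul_im]
  ring

lemma lie_eq {n : ℕ} (z : EuclideanSpace ℂ (Fin n)) :
    ‖z‖ ^ 2 + Real.sqrt (‖z‖ ^ 4 - ‖Q z‖ ^ 2)
      = Dsum (Xp z) (Xp z) + Dsum (Yp z) (Yp z)
        + 2 * Real.sqrt (Dsum (Xp z) (Xp z) * Dsum (Yp z) (Yp z)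
            - Dsum (Xp z) (Yp z) * Dsum (Xp z) (Yp z)) := by
  have h4 : ‖z‖ ^ 4 - ‖Q z‖ ^ 2
      = 4 * (Dsum (Xp z) (Xp z) * Dsum (Yp z) (Yp z)
          - Dsum (Xp z) (Yp z) * Dsum (Xp z) (Yp z)) := by
    have habs : ‖Q z‖ ^ 2 = (Q z).re ^ 2 + (Q z).im ^ 2 := by
      rw [Complex.sq_norm, Complex.normSq_apply]; ring
    have h2 : ‖z‖ ^ 4 = (‖z‖ ^ 2) ^ 2 := by ring
    rw [h2, norm_sq_eq, habs, Q_re, Q_im]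
    ring
  rw [h4, norm_sq_eq, Real.sqrt_mul (by norm_num : (0:ℝ) ≤ 4),
    show Real.sqrt 4 = 2 by
      rw [show (4:ℝ) = 2 ^ 2 by norm_num, Real.sqrt_sq (by norm_num : (0:ℝ) ≤ 2)]]

lemma Xp_comb {n : ℕ} (z w : EuclideanSpace ℂ (Fin n)) (a b : ℝ) :
    Xp (a • z + b • w) = fun i => a * Xp z i + b * Xp w i := by
  funext i
  simp [Xp, Complex.add_re, Complex.real_smul]

lemma Yp_comb {n : ℕ} (z w : EuclideanSpace ℂ (Fin n)) (a b : ℝ) :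
    Yp (a • z + b • w) = fun i => a * Yp z i + b * Yp w i := by
  funext i
  simp [Yp, Complex.add_im, Complex.real_smul]

/-- The value `A + B + 2√(AB − C²)` associated to `z`. -/
def Nval {n : ℕ} (z : EuclideanSpace ℂ (Fin n)) : ℝ :=
  Dsum (Xp z) (Xp z) + Dsum (Yp z) (Yp z)
    + 2 * Real.sqrt (Dsum (Xp z) (Xp z) * Dsum (Yp z) (Yp z)
        - Dsum (Xp z) (Yp z) * Dsum (Xp z) (Yp z))

lemma Nval_nonneg {n : ℕ} (z : EuclideanSpace ℂ (Fin n)) : 0 ≤ Nval z := by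
  have h1 := Dsum.self_nonneg (Xp z)
  have h2 := Dsum.self_nonneg (Yp z)
  have h3 := Real.sqrt_nonneg (Dsum (Xp z) (Xp z) * Dsum (Yp z) (Yp z)
    - Dsum (Xp z) (Yp z) * Dsum (Xp z) (Yp z))
  unfold Nval; linarith

set_option maxHeartbeats 1000000 in
theorem stmt4 (n : ℕ) (hn : 1 ≤ n) : Convex ℝ (LieBall n) := by
  intro z hz w hw a b ha hb hab
  simp only [LieBall, Set.mem_setOf_eq] at hz hw ⊢
  rw [lie_eq] at hz hw ⊢
  change Nval z < 1 at hz
  change Nval w < 1 at hw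
  change Nval (a • z + b • w) < 1
  set m := a • z + b • w with hm
  -- the attaining functional for m
  obtain ⟨u, v, hP, hval⟩ := attain_aux (Xp m) (Yp m)
  have huz := upper_aux (Xp z) (Yp z) u v hP
  have huw := upper_aux (Xp w) (Yp w) u v hP
  -- linearity of the pairing
  have hlin : Dsum (Xp m) u + Dsum (Yp m) v
      = a * (Dsum (Xp z) u + Dsum (Yp z) v) + b * (Dsum (Xp w) u + Dsum (Yp w) v) := by
    rw [hm, Xp_comb, Yp_comb, Dsum.add_left, Dsum.add_left]
    ring
  set Lz := Real.sqrt (Nval z) with hLz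
  set Lw := Real.sqrt (Nval w) with hLw
  have hLz1 : Lz < 1 := by
    rw [hLz]
    exact (Real.sqrt_lt' one_pos).mpr (by simpa using hz)
  have hLw1 : Lw < 1 := by
    rw [hLw]
    exact (Real.sqrt_lt' one_pos).mpr (by simpa using hw)
  have hLz0 : 0 ≤ Lz := Real.sqrt_nonneg _
  have hLw0 : 0 ≤ Lw := Real.sqrt_nonneg _
  have hmle : Real.sqrt (Nval m) ≤ a * Lz + b * Lw := by
    refine le_trans hval ?_
    rw [hlin]
    have h1 : Dsum (Xp z) u + Dsum (Yp z) v ≤ Lz := huz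
    have h2 : Dsum (Xp w) u + Dsum (Yp w) v ≤ Lw := huw
    nlinarith [h1, h2, ha, hb]
  have hsq : Nval m = Real.sqrt (Nval m) ^ 2 := (Real.sq_sqrt (Nval_nonneg m)).symm
  have habs : a * Lz + b * Lw < 1 := by
    rcases eq_or_lt_of_le ha with h0 | hapos
    · have hb1 : b = 1 := by linarith
      rw [← h0, hb1]
      simpa using hLw1
    · have h1 : a * Lz < a := by nlinarith
      have h2 : b * Lw ≤ b := by nlinarith
      linarith
  have hnn : 0 ≤ a * Lz + b * Lw := by positivity
  calc Nval m = Real.sqrt (Nval m) ^ 2 := hsq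
    _ ≤ (a * Lz + b * Lw) ^ 2 := by
        apply pow_le_pow_left₀ (Real.sqrt_nonneg _) hmle
    _ < 1 := by nlinarith [habs, hnn]

end
end

section
/- The Lie ball is the smallest convex subset of ℂⁿ that contains the real unit ball and is stable under multiplication by unit complex numbers: any convex set C ⊆ ℂⁿ containing {x ∈ ℝⁿ : ‖x‖ < 1} and satisfying λC ⊆ C for all |λ| = 1 contains ℬⁿ. -/
open scoped RealInnerProductSpace

noncomputable section

lemma Q_smul' {n : ℕ} (c : ℂ) (z : EuclideanSpace ℂ (Fin n)) : Q (c • z) = c ^ 2 * Q z := by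
  simp [Q, Finset.mul_sum, mul_pow]

lemma lam_sq_mul (z : ℂ) :
    (Complex.exp ((↑(-(Complex.arg z) / 2) : ℂ) * Complex.I)) ^ 2 * z = (‖z‖ : ℂ) := by
  have h := Complex.norm_mul_exp_arg_mul_I z
  set t := z.arg with ht
  set r := ‖z‖ with hr
  rw [← h, sq, ← Complex.exp_add, mul_comm ((r : ℂ)) _, ← mul_assoc, ← Complex.exp_add]
  have h2 : ((↑(-t / 2) : ℂ) * Complex.I + ↑(-t / 2) * Complex.I + ↑t * Complex.I) = 0 := by
    push_cast; ring
  rw [h2, Complex.exp_zero, one_mul]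

lemma norm_sq_complex {n : ℕ} (w : EuclideanSpace ℂ (Fin n)) :
    ‖w‖ ^ 2 = ∑ i, (((w i).re) ^ 2 + ((w i).im) ^ 2) := by
  rw [EuclideanSpace.norm_eq, Real.sq_sqrt (by positivity)]
  congr 1; funext i
  rw [Complex.sq_norm, Complex.normSq_apply]; ring

lemma norm_sq_real {n : ℕ} (x : EuclideanSpace ℝ (Fin n)) :
    ‖x‖ ^ 2 = ∑ i, (x i) ^ 2 := by
  rw [EuclideanSpace.norm_eq, Real.sq_sqrt (by positivity)]
  simp [sq_abs]

set_option maxHeartbeats 1000000 in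
theorem stmt8 (n : ℕ) (C : Set (EuclideanSpace ℂ (Fin n))) (hconv : Convex ℝ C)
    (hreal : {z : EuclideanSpace ℂ (Fin n) | ∃ x : EuclideanSpace ℝ (Fin n), ‖x‖ < 1 ∧ z = embed x} ⊆ C)
    (hrot : ∀ lam : ℂ, ‖lam‖ = 1 → (fun z => lam • z) '' C ⊆ C) :
    LieBall n ⊆ C := by
  intro z hz
  have hz' : ‖z‖ ^ 2 + Real.sqrt (‖z‖ ^ 4 - ‖Q z‖ ^ 2) < 1 := hz
  set lam : ℂ := Complex.exp ((↑(-(Complex.arg (Q z)) / 2) : ℂ) * Complex.I) with hlamdef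
  have hlamabs : ‖lam‖ = 1 := by
    rw [hlamdef]; exact Complex.norm_exp_ofReal_mul_I _
  set w : EuclideanSpace ℂ (Fin n) := lam • z with hwdef
  have hQw : Q w = (‖Q z‖ : ℂ) := by
    rw [hwdef, Q_smul']; exact lam_sq_mul (Q z)
  have hnw : ‖w‖ = ‖z‖ := by
    rw [hwdef, norm_smul, hlamabs, one_mul]
  clear_value lam w
  -- main step: show w ∈ C
  suffices hw : w ∈ C by
    have hconj : ‖(starRingEnd ℂ) lam‖ = 1 := by
      rw [Complex.norm_conj]; exact hlamabs
    have hzw : z = (starRingEnd ℂ) lam • w := by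
      rw [hwdef, smul_smul]
      have : (starRingEnd ℂ) lam * lam = 1 := by
        rw [mul_comm, Complex.mul_conj]
        norm_cast
        rw [Complex.normSq_eq_norm_sq, hlamabs]; norm_num
      rw [this, one_smul]
    rw [hzw]
    exact hrot _ hconj ⟨w, hw, rfl⟩
  set A : ℝ := ∑ i, ((w i).re) ^ 2 with hAdef
  set B : ℝ := ∑ i, ((w i).im) ^ 2 with hBdef
  have hA0 : 0 ≤ A := Finset.sum_nonneg fun i _ => sq_nonneg _
  have hB0 : 0 ≤ B := Finset.sum_nonneg fun i _ => sq_nonneg _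
  have hABnorm : ‖z‖ ^ 2 = A + B := by
    rw [← hnw, norm_sq_complex, Finset.sum_add_distrib]
  have hQwre : (Q w).re = A - B ∧ (Q w).im = ∑ i, 2 * (w i).re * (w i).im := by
    constructor
    · rw [Q, Complex.re_sum, hAdef, hBdef, ← Finset.sum_sub_distrib]
      congr 1; funext i
      rw [sq, Complex.mul_re]; ring
    · rw [Q, Complex.im_sum]
      congr 1; funext i
      rw [sq, Complex.mul_im]; ring
  have hAmB : A - B = ‖Q z‖ := by
    rw [← hQwre.1, hQw, Complex.ofReal_re]
  have hxy0 : ∑ i, (w i).re * (w i).im = 0 := by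
    have h1 : (Q w).im = 0 := by rw [hQw, Complex.ofReal_im]
    rw [hQwre.2] at h1
    have h2 : ∑ i, 2 * (w i).re * (w i).im = 2 * ∑ i, (w i).re * (w i).im := by
      rw [Finset.mul_sum]; congr 1; funext i; ring
    rw [h2] at h1; linarith
  have hAmB0 : 0 ≤ A - B := by rw [hAmB]; exact norm_nonneg _
  set a : ℝ := Real.sqrt A with hadef
  set b : ℝ := Real.sqrt B with hbdef
  have ha2 : a ^ 2 = A := Real.sq_sqrt hA0
  have hb2 : b ^ 2 = B := Real.sq_sqrt hB0
  have ha0 : 0 ≤ a := Real.sqrt_nonneg _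
  have hb0 : 0 ≤ b := Real.sqrt_nonneg _
  clear_value A B a b
  -- the key scalar inequality: a + b < 1
  have hab1 : a + b < 1 := by
    have h4 : ‖z‖ ^ 4 - ‖Q z‖ ^ 2 = (2 * a * b) ^ 2 := by
      have : ‖z‖ ^ 4 = (‖z‖ ^ 2) ^ 2 := by ring
      rw [this, hABnorm, ← hAmB]; nlinarith [ha2, hb2]
    rw [h4, Real.sqrt_sq (by positivity), hABnorm] at hz'
    have hsq : (a + b) ^ 2 < 1 := by nlinarith [ha2, hb2]
    exact (pow_lt_one_iff_of_nonneg (by positivity) two_ne_zero).mp hsq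
  by_cases hBzero : B = 0
  · -- w is real, directly in C
    have him : ∀ i, (w i).im = 0 := by
      intro i
      have hsum : ∑ i, ((w i).im) ^ 2 = 0 := by rw [← hBdef]; exact hBzero
      have h := (Finset.sum_eq_zero_iff_of_nonneg
        (fun i _ => sq_nonneg ((w i).im))).mp hsum i (Finset.mem_univ i)
      exact pow_eq_zero_iff (two_ne_zero) |>.mp h
    have hAlt : A < 1 := by
      have hs0 := Real.sqrt_nonneg (‖z‖ ^ 4 - ‖Q z‖ ^ 2)
      rw [hABnorm] at hz'
      linarith
    set x0 : EuclideanSpace ℝ (Fin n) := WithLp.toLp 2 (fun i => (w i).re) with hx0def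
    refine hreal ⟨x0, ?_, ?_⟩
    · have hxn : ‖x0‖ ^ 2 = A := by
        rw [norm_sq_real, hAdef]
      have h2 : ‖x0‖ = Real.sqrt A := by
        rw [← Real.sqrt_sq (norm_nonneg x0), hxn]
      rw [h2, ← Real.sqrt_one]
      exact Real.sqrt_lt_sqrt hA0 hAlt
    · ext i
      exact (Complex.ext (by simp [embed, hx0def]) (by simp [embed, hx0def, him i])).symm
  · -- main case : B > 0
    have hBpos : 0 < B := lt_of_le_of_ne hB0 (Ne.symm hBzero)
    have hApos : 0 < A := by linarith
    have hapos : 0 < a := by rw [hadef]; exact Real.sqrt_pos.mpr hApos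
    have hbpos : 0 < b := by rw [hbdef]; exact Real.sqrt_pos.mpr hBpos
    set r : ℝ := (1 + (a + b)) / 2 with hrdef
    have hr0 : 0 < r := by rw [hrdef]; positivity
    have hr1 : r < 1 := by rw [hrdef]; linarith
    have hrab : a + b < r := by rw [hrdef]; linarith
    set σ : ℝ := Real.arccos ((a + b) / r) with hσdef
    set τ : ℝ := Real.arccos ((a - b) / r) with hτdef
    have hcσ : Real.cos σ * r = a + b := by
      rw [hσdef, Real.cos_arccos (le_trans (by norm_num : (-1:ℝ) ≤ 0) (by positivity)) ((div_le_one hr0).mpr hrab.le)]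
      field_simp
    have hcτ : Real.cos τ * r = a - b := by
      rw [hτdef, Real.cos_arccos ((le_div_iff₀ hr0).mpr (by linarith)) ((div_le_one hr0).mpr (by linarith))]
      field_simp
    set φ : ℝ := (τ + σ) / 2 with hφdef
    set θ : ℝ := (τ - σ) / 2 with hθdef
    have hφθ1 : φ - θ = σ := by rw [hφdef, hθdef]; ring
    have hφθ2 : φ + θ = τ := by rw [hφdef, hθdef]; ring
    have E2 : (Real.cos φ * Real.cos θ + Real.sin φ * Real.sin θ) * r = a + b := by
      rw [← Real.cos_sub, hφθ1]; exact hcσ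
    have E1 : (Real.cos φ * Real.cos θ - Real.sin φ * Real.sin θ) * r = a - b := by
      rw [← Real.cos_add, hφθ2]; exact hcτ
    have hccr : Real.cos φ * Real.cos θ * r = a := by nlinarith [E1, E2]
    have hssr : Real.sin φ * Real.sin θ * r = b := by nlinarith [E1, E2]
    set x : EuclideanSpace ℝ (Fin n) := WithLp.toLp 2 (fun i => (w i).re) with hxdef
    set y : EuclideanSpace ℝ (Fin n) := WithLp.toLp 2 (fun i => (w i).im) with hydef
    have hxi : ∀ i, x i = (w i).re := fun i => rfl
    have hyi : ∀ i, y i = (w i).im := fun i => rfl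
    set p : ℝ := r * Real.cos θ / a with hpdef
    set q : ℝ := r * Real.sin θ / b with hqdef
    have hcp : Real.cos φ * p = 1 := by
      rw [hpdef]
      field_simp
      linear_combination hccr
    have hsq1 : Real.sin φ * q = 1 := by
      rw [hqdef]
      field_simp
      linear_combination hssr
    set u : EuclideanSpace ℝ (Fin n) := p • x + q • y with hudef
    set v : EuclideanSpace ℝ (Fin n) := p • x - q • y with hvdef
    have hui : ∀ i, u i = p * x i + q * y i := fun i => rfl
    have hvi : ∀ i, v i = p * x i - q * y i := fun i => rfl
    have hxA : (∑ i, (x i) ^ 2) = A := by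
      rw [hAdef]
    have hyB : (∑ i, (y i) ^ 2) = B := by
      rw [hBdef]
    have hxysum0 : ∑ i, x i * y i = 0 := by
      rw [← hxy0]
    clear_value σ τ φ θ r p q x y u v
    have hp2a : p ^ 2 * A = r ^ 2 * Real.cos θ ^ 2 := by
      rw [hpdef, ← ha2, div_pow, div_mul_cancel₀ _ (pow_ne_zero 2 hapos.ne'), mul_pow]
    have hq2b : q ^ 2 * B = r ^ 2 * Real.sin θ ^ 2 := by
      rw [hqdef, ← hb2, div_pow, div_mul_cancel₀ _ (pow_ne_zero 2 hbpos.ne'), mul_pow]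
    have hsumu : ∑ i, (u i) ^ 2 = r ^ 2 := by
      have step : ∑ i, (u i) ^ 2
          = p ^ 2 * (∑ i, (x i) ^ 2) + 2 * p * q * (∑ i, x i * y i)
            + q ^ 2 * (∑ i, (y i) ^ 2) := by
        rw [Finset.mul_sum, Finset.mul_sum, Finset.mul_sum, ← Finset.sum_add_distrib,
          ← Finset.sum_add_distrib]
        exact Finset.sum_congr rfl fun i _ => by rw [hui i]; ring
      rw [step, hxA, hyB, hxysum0, hp2a, hq2b]
      linear_combination r ^ 2 * Real.sin_sq_add_cos_sq θ
    have hsumv : ∑ i, (v i) ^ 2 = r ^ 2 := by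
      have step : ∑ i, (v i) ^ 2
          = p ^ 2 * (∑ i, (x i) ^ 2) - 2 * p * q * (∑ i, x i * y i)
            + q ^ 2 * (∑ i, (y i) ^ 2) := by
        rw [Finset.mul_sum, Finset.mul_sum, Finset.mul_sum, ← Finset.sum_sub_distrib,
          ← Finset.sum_add_distrib]
        exact Finset.sum_congr rfl fun i _ => by rw [hvi i]; ring
      rw [step, hxA, hyB, hxysum0, hp2a, hq2b]
      linear_combination r ^ 2 * Real.sin_sq_add_cos_sq θ
    have hnu : ‖u‖ < 1 := by
      have h1 : ‖u‖ ^ 2 = r ^ 2 := by rw [norm_sq_real]; exact hsumu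
      have h2 : ‖u‖ = r := by
        rw [← Real.sqrt_sq (norm_nonneg u), h1, Real.sqrt_sq hr0.le]
      rw [h2]; exact hr1
    have hnv : ‖v‖ < 1 := by
      have h1 : ‖v‖ ^ 2 = r ^ 2 := by rw [norm_sq_real]; exact hsumv
      have h2 : ‖v‖ = r := by
        rw [← Real.sqrt_sq (norm_nonneg v), h1, Real.sqrt_sq hr0.le]
      rw [h2]; exact hr1
    set μ : ℂ := Complex.exp ((φ : ℂ) * Complex.I) with hμdef
    have hμabs : ‖μ‖ = 1 := Complex.norm_exp_ofReal_mul_I φ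
    have hμre : μ.re = Real.cos φ := Complex.exp_ofReal_mul_I_re φ
    have hμim : μ.im = Real.sin φ := Complex.exp_ofReal_mul_I_im φ
    clear_value μ
    have hu2 : μ • embed u ∈ C := hrot μ hμabs ⟨embed u, hreal ⟨u, hnu, rfl⟩, rfl⟩
    have hv2 : (starRingEnd ℂ) μ • embed v ∈ C :=
      hrot _ (by rw [Complex.norm_conj]; exact hμabs) ⟨embed v, hreal ⟨v, hnv, rfl⟩, rfl⟩
    have hcomb := hconv hu2 hv2 (by norm_num : (0:ℝ) ≤ 1/2) (by norm_num : (0:ℝ) ≤ 1/2)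
      (by norm_num : (1/2 : ℝ) + 1/2 = 1)
    have heq : (1/2 : ℝ) • (μ • embed u) + (1/2 : ℝ) • ((starRingEnd ℂ) μ • embed v) = w := by
      ext i
      show (1/2 : ℝ) • (μ * ((u i : ℂ))) + (1/2 : ℝ) • ((starRingEnd ℂ) μ * ((v i : ℂ))) = w i
      rw [hui i, hvi i, hxi i, hyi i]
      apply Complex.ext
      · simp only [Complex.add_re, Complex.real_smul, Complex.mul_re, Complex.ofReal_re,
          Complex.ofReal_im, Complex.mul_im, Complex.conj_re, Complex.conj_im, hμre, hμim]
        linear_combination ((w i).re) * hcp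
      · simp only [Complex.add_im, Complex.real_smul, Complex.mul_re, Complex.ofReal_re,
          Complex.ofReal_im, Complex.mul_im, Complex.conj_re, Complex.conj_im, hμre, hμim]
        linear_combination ((w i).im) * hsq1
    rwa [heq] at hcomb

end
end

section
/- For the complexified inversion γ̃(z) = z/Q(z) and z, z' ∈ ℂⁿ with Q(z)Q(z') ≠ 0: Q(z − z') = 0 if and only if Q(γ̃(z) − γ̃(z')) = 0. In particular γ̃ maps isotropic cones to isotropic cones. -/
open scoped RealInnerProductSpace

noncomputable section

theorem stmt10 (n : ℕ) (z z' : EuclideanSpace ℂ (Fin n)) (h : Q z * Q z' ≠ 0) :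
    Q (z - z') = 0 ↔ Q ((Q z)⁻¹ • z - (Q z')⁻¹ • z') = 0 := by
  have ha : Q z ≠ 0 := fun hz => h (by rw [hz, zero_mul])
  have hb : Q z' ≠ 0 := fun hz => h (by rw [hz, mul_zero])
  set a := Q z with h1
  set b := Q z' with h2
  have hB : ∀ (c d : ℂ), Q (c • z - d • z') =
      c ^ 2 * a - 2 * (c * d) * (∑ i, z i * z' i) + d ^ 2 * b := by
    intro c d
    simp only [Q, h1, h2, PiLp.sub_apply, PiLp.smul_apply, smul_eq_mul,
      Finset.mul_sum, ← Finset.sum_add_distrib, ← Finset.sum_sub_distrib]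
    exact Finset.sum_congr rfl fun i _ => by ring
  have e1 : Q (z - z') = a - 2 * (∑ i, z i * z' i) + b := by
    have := hB 1 1
    simpa using this
  have e2 : Q ((Q z)⁻¹ • z - (Q z')⁻¹ • z') =
      (a * b)⁻¹ * Q (z - z') := by
    rw [hB a⁻¹ b⁻¹, e1]
    field_simp
    ring
  rw [e2]
  constructor
  · intro hq; rw [hq, mul_zero]
  · intro hq
    rcases mul_eq_zero.mp hq with h' | h'
    · exact absurd h' (inv_ne_zero h)
    · exact h'

end
end

section
/- Define θ(x, v) = δ̃_x(z') where z' = −i (v/‖v‖) tanh(‖v‖/(1 − ‖x‖²)) and δ̃_x is the holomorphic continuation of δ_x given by the same rational formula with Q replacing ‖·‖² and the complex bilinear dot product. Then for every x in the open unit ball and v ∈ ℝⁿ ∖ {0}, θ(x,v) lies in the Lie ball ℬⁿ. -/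
open scoped RealInnerProductSpace

noncomputable section

/-- The complex bilinear dot product on ℂⁿ. -/
def dotC {n : ℕ} (z w : EuclideanSpace ℂ (Fin n)) : ℂ := ∑ i, z i * w i

/-- Holomorphic continuation of the hyperbolic motion `δ_a`. -/
def deltaC {n : ℕ} (a : EuclideanSpace ℝ (Fin n)) (z : EuclideanSpace ℂ (Fin n)) :
    EuclideanSpace ℂ (Fin n) :=
  (Q (embed a) * Q z - 2 * dotC (embed a) z + 1)⁻¹ •
    (((‖a‖ ^ 2 : ℝ) - 1 : ℂ) • z + (1 + Q z) • embed a - (2 * dotC z (embed a)) • embed a)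

lemma hns1 (A B S : ℝ) : Complex.normSq ((1 - (A:ℂ)*B) + 2*S*Complex.I) = (1-A*B)^2+4*S^2 := by
  simp [Complex.normSq_apply]; ring

lemma hns2 (A B S x y : ℝ) : Complex.normSq (((1-(A:ℂ))*Complex.I) * x + ((1-(B:ℂ)) + 2*S*Complex.I) * y)
    = (1-A)^2*x^2 + 4*S*(1-A)*(x*y) + ((1-B)^2+4*S^2)*y^2 := by
  simp [Complex.normSq_apply]; ring

lemma hns3 (A B S : ℝ) : Complex.normSq (((1-(A:ℂ))*Complex.I)^2*B
      + 2*((1-(A:ℂ))*Complex.I)*((1-(B:ℂ))+2*S*Complex.I)*S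
      + ((1-(B:ℂ))+2*S*Complex.I)^2*A)
    = (A*(1-B)^2 - B*(1-A)^2 - 4*S^2)^2 + 4*S^2*(1-B)^2*(1+A)^2 := by
  simp [Complex.normSq_apply, pow_two]; ring

set_option maxHeartbeats 1000000 in
lemma main_lemma {n : ℕ} (a b : EuclideanSpace ℝ (Fin n)) (ha : ‖a‖ < 1) (hb : ‖b‖ < 1) :
    deltaC a ((-Complex.I) • embed b) ∈ LieBall n := by
  set A : ℝ := ‖a‖^2 with hAdef
  set B : ℝ := ‖b‖^2 with hBdef
  set S : ℝ := ⟪a, b⟫ with hSdef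
  have hra : ∑ i, (a i)^2 = A := by
    rw [hAdef, ← real_inner_self_eq_norm_sq]
    simp [PiLp.inner_apply, RCLike.inner_apply, sq]
    rw [← sq, EuclideanSpace.norm_eq, Real.sq_sqrt (by positivity)]
    exact Finset.sum_congr rfl fun i _ => by rw [Real.norm_eq_abs, sq_abs, sq]
  have hrb : ∑ i, (b i)^2 = B := by
    rw [hBdef, ← real_inner_self_eq_norm_sq]
    simp [PiLp.inner_apply, RCLike.inner_apply, sq]
    rw [← sq, EuclideanSpace.norm_eq, Real.sq_sqrt (by positivity)]
    exact Finset.sum_congr rfl fun i _ => by rw [Real.norm_eq_abs, sq_abs, sq]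
  have hrs : ∑ i, a i * b i = S := by
    simp [hSdef, PiLp.inner_apply, RCLike.inner_apply]
    exact Finset.sum_congr rfl fun i _ => mul_comm _ _
  have hca : ∑ i, ((a i : ℂ))^2 = (A : ℂ) := by rw [← hra]; push_cast; rfl
  have hcb : ∑ i, ((b i : ℂ))^2 = (B : ℂ) := by rw [← hrb]; push_cast; rfl
  have hcs : ∑ i, ((a i : ℂ)) * ((b i : ℂ)) = (S : ℂ) := by rw [← hrs]; push_cast; rfl
  have hA0 : 0 ≤ A := sq_nonneg _
  have hB0 : 0 ≤ B := sq_nonneg _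
  have hA1 : A < 1 := by rw [hAdef]; nlinarith [norm_nonneg a]
  have hB1 : B < 1 := by rw [hBdef]; nlinarith [norm_nonneg b]
  have hCS : S^2 ≤ A * B := by
    rw [hSdef, hAdef, hBdef]
    nlinarith [abs_real_inner_le_norm a b, sq_abs (⟪a,b⟫:ℝ), abs_nonneg (⟪a,b⟫:ℝ),
      norm_nonneg a, norm_nonneg b]
  set z : EuclideanSpace ℂ (Fin n) := (-Complex.I) • embed b with hzdef
  have hzi : ∀ i, z i = -Complex.I * (b i : ℂ) := fun i => by rw [hzdef]; simp [embed]
  have hai : ∀ i, embed a i = (a i : ℂ) := fun i => rfl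
  have hQa : Q (embed a) = (A : ℂ) := by simp only [Q, hai]; exact hca
  have hIx : ∀ x : ℂ, (-Complex.I * x)^2 = -(x^2) := fun x => by
    rw [mul_pow, neg_sq, Complex.I_sq]; ring
  have hQz : Q z = -(B : ℂ) := by
    simp only [Q, hzi, hIx]
    rw [Finset.sum_neg_distrib, hcb]
  have hdaz : dotC (embed a) z = -Complex.I * (S : ℂ) := by
    simp only [dotC, hzi, hai,
      show ∀ i : Fin n, (a i : ℂ) * (-Complex.I * (b i : ℂ)) = -Complex.I * ((a i : ℂ) * (b i:ℂ)) from fun i => by ring]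
    rw [← Finset.mul_sum, hcs]
  have hdza : dotC z (embed a) = -Complex.I * (S : ℂ) := by
    simp only [dotC, hzi, hai,
      show ∀ i : Fin n, (-Complex.I * (b i : ℂ)) * (a i : ℂ) = -Complex.I * ((a i : ℂ) * (b i:ℂ)) from fun i => by ring]
    rw [← Finset.mul_sum, hcs]
  set c1 : ℂ := (1 - (A:ℂ)) * Complex.I with hc1
  set c2 : ℂ := (1 - (B:ℂ)) + 2*S*Complex.I with hc2
  set D : ℂ := (1 - (A:ℂ)*B) + 2*S*Complex.I with hD
  set w := deltaC a z with hwdef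
  have h1 : Q (embed a) * Q z - 2 * dotC (embed a) z + 1 = D := by
    rw [hQa, hQz, hdaz, hD]; ring
  have hwi : ∀ i, w i = D⁻¹ * (c1 * (b i : ℂ) + c2 * (a i : ℂ)) := by
    intro i
    have h2 : w = D⁻¹ • (((‖a‖^2:ℝ) - 1 : ℂ) • z + (1 + Q z) • embed a
        - (2 * dotC z (embed a)) • embed a) := by
      rw [hwdef, deltaC, h1]
    rw [h2]
    show D⁻¹ * ((((‖a‖^2:ℝ) - 1 : ℂ) • z + (1 + Q z) • embed a
        - (2 * dotC z (embed a)) • embed a) i) = _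
    congr 1
    show ((‖a‖^2:ℝ) - 1 : ℂ) * z i + (1 + Q z) * embed a i
        - (2 * dotC z (embed a)) * embed a i = _
    rw [hzi, hai, hQz, hdza, ← hAdef, hc1, hc2]
    ring
  set P : ℝ := (1 - A*B)^2 + 4*S^2 with hP
  set MM : ℝ := (1-B)^2*A + (1-A)^2*B + 4*S^2 with hMM
  have hnsD : Complex.normSq D = P := by rw [hD, hP]; exact hns1 A B S
  have hABlt : A * B < 1 := by nlinarith
  have hPpos : 0 < P := by rw [hP]; nlinarith
  have hnw : ‖w‖^2 = P⁻¹ * MM := by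
    rw [EuclideanSpace.norm_eq, Real.sq_sqrt (by positivity)]
    have hper : ∀ i, ‖w i‖^2 = P⁻¹ * ((1-A)^2 * (b i)^2 + (4*S*(1-A)) * (b i * a i)
        + ((1-B)^2+4*S^2) * (a i)^2) := by
      intro i
      rw [Complex.sq_norm, hwi i, map_mul, map_inv₀, hnsD]
      congr 1
      rw [hc1, hc2]
      exact hns2 A B S (b i) (a i)
    simp only [hper]
    rw [← Finset.mul_sum]
    congr 1
    rw [Finset.sum_add_distrib, Finset.sum_add_distrib, ← Finset.mul_sum, ← Finset.mul_sum,
      ← Finset.mul_sum, hrb, hra,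
      show ∑ i, b i * a i = S from by rw [← hrs]; exact Finset.sum_congr rfl fun i _ => mul_comm _ _,
      hMM]
    ring
  set QN : ℂ := c1^2 * B + 2*c1*c2*S + c2^2*A with hQN
  have hQw : Q w = (D⁻¹)^2 * QN := by
    simp only [Q, hwi,
      show ∀ i : Fin n, (D⁻¹ * (c1 * (b i:ℂ) + c2 * (a i:ℂ)))^2
        = (D⁻¹)^2 * (c1^2 * (b i:ℂ)^2 + 2*c1*c2*((a i:ℂ)*(b i:ℂ)) + c2^2*(a i:ℂ)^2) from
        fun i => by ring]
    rw [← Finset.mul_sum, Finset.sum_add_distrib, Finset.sum_add_distrib,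
      ← Finset.mul_sum, ← Finset.mul_sum, ← Finset.mul_sum, hca, hcb, hcs, hQN]
  set RR : ℝ := (A*(1-B)^2 - B*(1-A)^2 - 4*S^2)^2 + 4*S^2*(1-B)^2*(1+A)^2 with hRR
  have hnsQN : Complex.normSq QN = RR := by
    rw [hQN, hc1, hc2, hRR]; exact hns3 A B S
  have habsQw : ‖Q w‖ ^ 2 = P⁻¹^2 * RR := by
    rw [Complex.sq_norm, hQw, map_mul, map_pow, map_inv₀, hnsD, hnsQN]
  have hPM : P - MM = (1-A)*(1-B)*(1+A*B) := by rw [hP, hMM]; ring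
  have hPMpos : 0 < P - MM := by
    rw [hPM]
    exact mul_pos (mul_pos (by linarith) (by linarith)) (by nlinarith)
  have hdiff : (P - MM)^2 - (MM^2 - RR) = (1-A)^2*(1-B)^2*P := by rw [hP, hMM, hRR]; ring
  have hkey : MM^2 - RR < (P - MM)^2 := by
    have hpos : 0 < (1-A)^2*(1-B)^2*P :=
      mul_pos (mul_pos (pow_pos (by linarith) 2) (pow_pos (by linarith) 2)) hPpos
    linarith [hdiff]
  have hw4 : ‖w‖^4 = (P⁻¹*MM)^2 := by rw [show ‖w‖^4 = (‖w‖^2)^2 from by ring, hnw]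
  show ‖w‖ ^ 2 + Real.sqrt (‖w‖ ^ 4 - ‖Q w‖ ^ 2) < 1
  rw [hnw, hw4, habsQw]
  have hPi : 0 < P⁻¹ := inv_pos.mpr hPpos
  have hlt1 : P⁻¹ * MM < 1 := by
    rw [inv_mul_lt_iff₀ hPpos]; nlinarith
  have hy : 0 < 1 - P⁻¹ * MM := by linarith
  have hsq : Real.sqrt ((P⁻¹*MM)^2 - P⁻¹^2 * RR) < 1 - P⁻¹ * MM := by
    rw [Real.sqrt_lt' hy]
    have h1' : 1 - P⁻¹ * MM = P⁻¹ * (P - MM) := by field_simp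
    rw [h1', show (P⁻¹*MM)^2 - P⁻¹^2*RR = P⁻¹^2 * (MM^2 - RR) from by ring, mul_pow]
    exact mul_lt_mul_of_pos_left hkey (by positivity)
  linarith

theorem stmt17 (n : ℕ) (x : EuclideanSpace ℝ (Fin n)) (hx : ‖x‖ < 1)
    (v : EuclideanSpace ℝ (Fin n)) (hv : v ≠ 0) :
    deltaC x ((-Complex.I * (Real.tanh (‖v‖ / (1 - ‖x‖ ^ 2)) / ‖v‖ : ℝ)) • embed v) ∈
      LieBall n := by
  set t : ℝ := Real.tanh (‖v‖ / (1 - ‖x‖ ^ 2)) with ht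
  have hvpos : 0 < ‖v‖ := norm_pos_iff.mpr hv
  have htabs : |t| < 1 := by
    rw [ht, abs_lt, Real.tanh_eq_sinh_div_cosh]
    set y := ‖v‖ / (1 - ‖x‖ ^ 2)
    constructor
    · rw [lt_div_iff₀ (Real.cosh_pos y)]
      nlinarith [Real.sinh_lt_cosh (-y), Real.sinh_neg y, Real.cosh_neg y]
    · rw [div_lt_one (Real.cosh_pos y)]; exact Real.sinh_lt_cosh y
  set b : EuclideanSpace ℝ (Fin n) := (t / ‖v‖) • v with hbdef
  have hbnorm : ‖b‖ < 1 := by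
    rw [hbdef, norm_smul]
    have : ‖t / ‖v‖‖ * ‖v‖ = |t| := by
      rw [Real.norm_eq_abs, abs_div, abs_norm, div_mul_cancel₀ _ (ne_of_gt hvpos)]
    rw [this]; exact htabs
  have harg : (-Complex.I * ((t / ‖v‖ : ℝ) : ℂ)) • embed v = (-Complex.I) • embed b := by
    ext i
    show (-Complex.I * ((t / ‖v‖ : ℝ) : ℂ)) * (v i : ℂ) = -Complex.I * ((b i : ℝ) : ℂ)
    have : b i = (t / ‖v‖) * v i := rfl
    rw [this]; push_cast; ring
  rw [harg]
  exact main_lemma x b hx hbnorm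


end
end

section
/- If b ∈ ℝⁿ with ‖b‖ ≥ 1 and z = x + iy ∈ ℂⁿ satisfies that the sphere T(z) (center x, radius ‖y‖, in the hyperplane through x orthogonal to y, y ≠ 0) is contained in the open unit ball, then Q(z − b) ≠ 0; equivalently, the isotropic cone Γ(b) of a real point outside the open unit ball is disjoint from the Lie ball. -/
open scoped RealInnerProductSpace

noncomputable section

namespace Stmt19Aux

variable {n : ℕ}

lemma myinner (x y : EuclideanSpace ℝ (Fin n)) : ⟪x, y⟫ = ∑ i, x i * y i := by
  simp [PiLp.inner_apply, RCLike.inner_apply, mul_comm]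

lemma normsq_real (x : EuclideanSpace ℝ (Fin n)) : ‖x‖ ^ 2 = ∑ i, x i ^ 2 := by
  rw [← real_inner_self_eq_norm_sq, myinner]; simp [sq]

lemma normsq_complex (z : EuclideanSpace ℂ (Fin n)) :
    ‖z‖ ^ 2 = ∑ i, ‖z i‖ ^ 2 := by
  rw [EuclideanSpace.norm_eq, Real.sq_sqrt (by positivity)]

lemma Q_decomp (x y : EuclideanSpace ℝ (Fin n)) :
    Q (embed x + Complex.I • embed y) =
      ((‖x‖ ^ 2 - ‖y‖ ^ 2 : ℝ) : ℂ) + ((2 * ⟪x, y⟫ : ℝ) : ℂ) * Complex.I := by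
  have h : ∀ i, ((embed x + Complex.I • embed y) i) ^ 2 =
      (((x i) ^ 2 - (y i) ^ 2 : ℝ) : ℂ) + (((2 * (x i * y i)) : ℝ) : ℂ) * Complex.I := by
    intro i
    have : (embed x + Complex.I • embed y) i = (x i : ℂ) + Complex.I * (y i : ℂ) := by simp [embed]
    rw [this]
    have h2 : (Complex.I : ℂ) ^ 2 = -1 := Complex.I_sq
    push_cast
    ring_nf
    rw [h2]
    ring
  unfold Q
  simp only [h]
  rw [Finset.sum_add_distrib, ← Finset.sum_mul, ← Complex.ofReal_sum, ← Complex.ofReal_sum,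
    Finset.sum_sub_distrib, ← normsq_real, ← normsq_real, ← Finset.mul_sum, ← myinner]

lemma sphere_bound (x y v : EuclideanSpace ℝ (Fin n)) (h1 : ⟪v, y⟫ = 0) (h2 : ‖v‖ = ‖y‖) :
    ⟪x, v⟫ ≤ Real.sqrt (‖x‖ ^ 2 * ‖y‖ ^ 2 - ⟪x, y⟫ ^ 2) := by
  by_cases hy : y = 0
  · have : v = 0 := by rw [← norm_eq_zero, h2, hy, norm_zero]
    simp [this, Real.sqrt_nonneg]
  · set c : ℝ := ⟪x, y⟫ / ‖y‖ ^ 2 with hc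
    have hyn : (0:ℝ) < ‖y‖ ^ 2 := by
      have := norm_pos_iff.mpr hy; positivity
    have h1' : ⟪y, v⟫ = (0:ℝ) := by rw [real_inner_comm]; exact h1
    have key : ⟪x, v⟫ = ⟪x - c • y, v⟫ := by
      rw [inner_sub_left, real_inner_smul_left, h1']; ring
    have hyx : ⟪y, x⟫ = ⟪x, y⟫ := real_inner_comm x y
    have hxp : ‖x - c • y‖ ^ 2 = ‖x‖ ^ 2 - ⟪x, y⟫ ^ 2 / ‖y‖ ^ 2 := by
      rw [← real_inner_self_eq_norm_sq, inner_sub_sub_self, real_inner_smul_left,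
        real_inner_smul_right, real_inner_smul_left, real_inner_smul_right,
        real_inner_self_eq_norm_sq x, real_inner_self_eq_norm_sq y, hyx, hc]
      field_simp
      ring
    have hD : ‖x - c • y‖ ^ 2 * ‖y‖ ^ 2 = ‖x‖ ^ 2 * ‖y‖ ^ 2 - ⟪x, y⟫ ^ 2 := by
      rw [hxp]
      field_simp
    calc ⟪x, v⟫ = ⟪x - c • y, v⟫ := key
      _ ≤ ‖x - c • y‖ * ‖v‖ := real_inner_le_norm _ _
      _ = Real.sqrt (‖x‖ ^ 2 * ‖y‖ ^ 2 - ⟪x, y⟫ ^ 2) := by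
          rw [h2, ← hD]
          rw [show ‖x - c • y‖ ^ 2 * ‖y‖ ^ 2 = (‖x - c • y‖ * ‖y‖) ^ 2 by ring,
            Real.sqrt_sq (by positivity)]

lemma Q_shift (x y b : EuclideanSpace ℝ (Fin n)) :
    (embed x + Complex.I • embed y) - embed b = embed (x - b) + Complex.I • embed y := by
  ext i
  simp [embed]
  ring

lemma Q_zero (x y b : EuclideanSpace ℝ (Fin n))
    (h : Q ((embed x + Complex.I • embed y) - embed b) = 0) :
    ‖b - x‖ = ‖y‖ ∧ ⟪b - x, y⟫ = 0 := by
  rw [Q_shift, Q_decomp] at h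
  rw [Complex.ext_iff] at h
  simp only [Complex.add_re, Complex.add_im, Complex.ofReal_re, Complex.ofReal_im,
    Complex.mul_re, Complex.mul_im, Complex.I_re, Complex.I_im, Complex.zero_re,
    Complex.zero_im, mul_zero, mul_one, zero_mul, sub_zero, add_zero, zero_add] at h
  obtain ⟨h1, h2⟩ := h
  constructor
  · have : ‖b - x‖ ^ 2 = ‖y‖ ^ 2 := by rw [norm_sub_rev]; linarith
    calc ‖b - x‖ = Real.sqrt (‖b - x‖ ^ 2) := (Real.sqrt_sq (norm_nonneg _)).symm
      _ = Real.sqrt (‖y‖ ^ 2) := by rw [this]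
      _ = ‖y‖ := Real.sqrt_sq (norm_nonneg _)
  · have : b - x = -(x - b) := by abel
    rw [this, inner_neg_left]
    have : ⟪x - b, y⟫ = (0:ℝ) := by linarith
    rw [this, neg_zero]

lemma key_bound (x y b : EuclideanSpace ℝ (Fin n)) (hb : 1 ≤ ‖b‖)
    (hlt : ‖x‖ ^ 2 + ‖y‖ ^ 2 + 2 * Real.sqrt (‖x‖ ^ 2 * ‖y‖ ^ 2 - ⟪x, y⟫ ^ 2) < 1)
    (h : Q ((embed x + Complex.I • embed y) - embed b) = 0) : False := by
  obtain ⟨hn, hi⟩ := Q_zero x y b h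
  have hsph := sphere_bound x y (b - x) hi hn
  have hbsq : ‖b‖ ^ 2 = ‖x‖ ^ 2 + 2 * ⟪x, b - x⟫ + ‖b - x‖ ^ 2 := by
    have : b = x + (b - x) := by abel
    calc ‖b‖ ^ 2 = ‖x + (b - x)‖ ^ 2 := by rw [← this]
      _ = ‖x‖ ^ 2 + 2 * ⟪x, b - x⟫ + ‖b - x‖ ^ 2 := norm_add_sq_real x (b - x)
  have h1 : (1:ℝ) ≤ ‖b‖ ^ 2 := by nlinarith [norm_nonneg b]
  rw [hn] at hbsq
  nlinarith

end Stmt19Aux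

open Stmt19Aux in
theorem stmt19 (n : ℕ) (hn : 3 ≤ n) (b : EuclideanSpace ℝ (Fin n)) (hb : 1 ≤ ‖b‖) :
    (∀ x y : EuclideanSpace ℝ (Fin n), y ≠ 0 →
      ({a : EuclideanSpace ℝ (Fin n) | ⟪a - x, y⟫ = 0 ∧ ‖a - x‖ = ‖y‖} ⊆ Metric.ball 0 1) →
      Q ((embed x + Complex.I • embed y) - embed b) ≠ 0) ∧
    ∀ z ∈ LieBall n, Q (z - embed b) ≠ 0 := by
  constructor
  · intro x y _ hsub hQ
    obtain ⟨hnrm, hinn⟩ := Q_zero x y b hQ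
    have hmem : b ∈ {a : EuclideanSpace ℝ (Fin n) | ⟪a - x, y⟫ = 0 ∧ ‖a - x‖ = ‖y‖} :=
      ⟨hinn, hnrm⟩
    have := hsub hmem
    rw [Metric.mem_ball, dist_zero_right] at this
    linarith
  · intro z hz hQ
    set x : EuclideanSpace ℝ (Fin n) := WithLp.toLp 2 (fun i => (z i).re) with hx
    set y : EuclideanSpace ℝ (Fin n) := WithLp.toLp 2 (fun i => (z i).im) with hy
    have hzd : z = embed x + Complex.I • embed y := by
      ext i
      simp only [embed, hx, hy, PiLp.add_apply, PiLp.smul_apply, smul_eq_mul]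
      rw [mul_comm]
      exact (Complex.re_add_im (z i)).symm
    -- norms
    have hzn : ‖z‖ ^ 2 = ‖x‖ ^ 2 + ‖y‖ ^ 2 := by
      rw [normsq_complex, normsq_real, normsq_real, ← Finset.sum_add_distrib]
      refine Finset.sum_congr rfl fun i _ => ?_
      rw [Complex.sq_norm, Complex.normSq_apply]
      simp [hx, hy, sq]
    have hQz : Q z = ((‖x‖ ^ 2 - ‖y‖ ^ 2 : ℝ) : ℂ) + ((2 * ⟪x, y⟫ : ℝ) : ℂ) * Complex.I := by
      rw [hzd, Q_decomp]
    have habs : ‖Q z‖ ^ 2 = (‖x‖ ^ 2 - ‖y‖ ^ 2) ^ 2 + (2 * ⟪x, y⟫) ^ 2 := by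
      rw [hQz, Complex.sq_norm, Complex.normSq_add_mul_I]
    set D : ℝ := ‖x‖ ^ 2 * ‖y‖ ^ 2 - ⟪x, y⟫ ^ 2 with hDdef
    have hD0 : 0 ≤ D := by
      have := abs_real_inner_le_norm x y
      nlinarith [abs_nonneg ⟪x, y⟫, sq_abs ⟪x, y⟫]
    have hdiff : ‖z‖ ^ 4 - ‖Q z‖ ^ 2 = 4 * D := by
      have : ‖z‖ ^ 4 = (‖z‖ ^ 2) ^ 2 := by ring
      rw [this, hzn, habs, hDdef]; ring
    have hsqrt : Real.sqrt (‖z‖ ^ 4 - ‖Q z‖ ^ 2) = 2 * Real.sqrt D := by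
      rw [hdiff, show (4:ℝ) * D = 2 ^ 2 * D by ring, Real.sqrt_mul (by positivity) D,
        Real.sqrt_sq (by norm_num)]
    have hlie : ‖z‖ ^ 2 + Real.sqrt (‖z‖ ^ 4 - ‖Q z‖ ^ 2) < 1 := hz
    rw [hzn, hsqrt] at hlie
    exact key_bound x y b hb (by linarith) (by rw [← hzd]; exact hQ)

end
end
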